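/- arXiv:2204.00180 — 5 statements merged into one kernel-verified Lean document; each statement's English description precedes it below -/
import Mathlib

section
/- Let θ_j^L and θ_j^U denote the bounds θ_j^L = [max(0, P(t=j,r=j) − P(r=j,y=1−j)) + max(0, P(r=1−j,y=j) − P(t=1−j,r=1−j))]/P(y=j) and θ_j^U = [min(P(t=j,r=1−j), P(r=1−j,y=j)) + min(P(t=j,r=j), P(r=j,y=j))]/P(y=j). Then for any binary random variables t, r, y with 0 < P(y=j) we have θ_j^L ≤ P(t=j | y=j) ≤ θ_j^U. -/
/-!
Splitting according to `r`, `P(t=j, y=j) = a + b` with `a = P(t=j, r=j, y=j)` and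
`b = P(t=j, r≠j, y=j)`. Each of `a`, `b` is at most either two-variable marginal containing it, and
at least the Fréchet-type bounds `P(t=j, r=j) - P(r=j, y≠j) ≤ a` and
`P(r≠j, y=j) - P(t≠j, r≠j) ≤ b`. Dividing by `P(y=j) ≥ 0` preserves the inequalities.
-/

open MeasureTheory

section

variable {Ω : Type*} [MeasurableSpace Ω] {μ : Measure Ω} [IsFiniteMeasure μ] {T R Y : Set Ω}

lemma measureReal_inter_eq_add_inter_compl (hR : MeasurableSet R) :
    μ.real (T ∩ Y) = μ.real (T ∩ R ∩ Y) + μ.real (T ∩ Rᶜ ∩ Y) := by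
  rw [← measureReal_inter_add_sdiff (s := T ∩ Y) hR]
  congr 2 <;> ext <;> simp only [Set.mem_inter_iff, Set.mem_sdiff, Set.mem_compl_iff] <;> tauto

lemma sub_le_measureReal_of_sdiff_subset {s u v : Set Ω} (h : s \ u ⊆ v) :
    μ.real s - μ.real u ≤ μ.real v :=
  le_trans le_measureReal_sdiff (measureReal_mono h)

lemma measureReal_inter_le_min_add_min (hR : MeasurableSet R) :
    μ.real (T ∩ Y) ≤ min (μ.real (T ∩ Rᶜ)) (μ.real (Rᶜ ∩ Y))
      + min (μ.real (T ∩ R)) (μ.real (R ∩ Y)) := by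
  have hin : μ.real (T ∩ R ∩ Y) ≤ min (μ.real (T ∩ R)) (μ.real (R ∩ Y)) :=
    le_min (measureReal_mono fun ω h => ⟨h.1.1, h.1.2⟩) (measureReal_mono fun ω h => ⟨h.1.2, h.2⟩)
  have hout : μ.real (T ∩ Rᶜ ∩ Y) ≤ min (μ.real (T ∩ Rᶜ)) (μ.real (Rᶜ ∩ Y)) :=
    le_min (measureReal_mono fun ω h => ⟨h.1.1, h.1.2⟩) (measureReal_mono fun ω h => ⟨h.1.2, h.2⟩)
  linarith [measureReal_inter_eq_add_inter_compl (μ := μ) (T := T) (Y := Y) hR]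

lemma max_add_max_le_measureReal_inter (hR : MeasurableSet R) :
    max 0 (μ.real (T ∩ R) - μ.real (R ∩ Yᶜ)) + max 0 (μ.real (Rᶜ ∩ Y) - μ.real (Tᶜ ∩ Rᶜ))
      ≤ μ.real (T ∩ Y) := by
  have hin : max 0 (μ.real (T ∩ R) - μ.real (R ∩ Yᶜ)) ≤ μ.real (T ∩ R ∩ Y) :=
    max_le measureReal_nonneg <| sub_le_measureReal_of_sdiff_subset fun ω ⟨⟨hωT, hωR⟩, h⟩ =>
      ⟨⟨hωT, hωR⟩, not_not.1 fun hωY => h ⟨hωR, hωY⟩⟩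
  have hout : max 0 (μ.real (Rᶜ ∩ Y) - μ.real (Tᶜ ∩ Rᶜ)) ≤ μ.real (T ∩ Rᶜ ∩ Y) :=
    max_le measureReal_nonneg <| sub_le_measureReal_of_sdiff_subset fun ω ⟨⟨hωR, hωY⟩, h⟩ =>
      ⟨⟨not_not.1 fun hωT => h ⟨hωT, hωR⟩, hωR⟩, hωY⟩
  linarith [measureReal_inter_eq_add_inter_compl (μ := μ) (T := T) (Y := Y) hR]

end

theorem theta_bounds_general {Ω : Type*} [MeasurableSpace Ω] (μ : Measure Ω)
    [IsProbabilityMeasure μ] (t r y : Ω → Bool)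
    (hr : Measurable r) (j : Bool) :
    (max 0 ((μ {ω | t ω = j ∧ r ω = j}).toReal - (μ {ω | r ω = j ∧ y ω = !j}).toReal)
      + max 0 ((μ {ω | r ω = !j ∧ y ω = j}).toReal
          - (μ {ω | t ω = !j ∧ r ω = !j}).toReal)) / (μ {ω | y ω = j}).toReal
      ≤ (μ {ω | t ω = j ∧ y ω = j}).toReal / (μ {ω | y ω = j}).toReal
    ∧ (μ {ω | t ω = j ∧ y ω = j}).toReal / (μ {ω | y ω = j}).toReal
      ≤ (min ((μ {ω | t ω = j ∧ r ω = !j}).toReal) ((μ {ω | r ω = !j ∧ y ω = j}).toReal)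
        + min ((μ {ω | t ω = j ∧ r ω = j}).toReal) ((μ {ω | r ω = j ∧ y ω = j}).toReal))
          / (μ {ω | y ω = j}).toReal := by
  have hnot : ∀ f : Ω → Bool, {ω | f ω = !j} = {ω | f ω = j}ᶜ := fun f => by
    ext ω; simp only [Set.mem_compl_iff, Set.mem_ofPred_eq, Bool.eq_not_iff]
  simp only [Set.ofPred_and, hnot, ← measureReal_def]
  have hR : MeasurableSet {ω | r ω = j} := hr (measurableSet_singleton j)
  exact ⟨div_le_div_of_nonneg_right (max_add_max_le_measureReal_inter hR) measureReal_nonneg,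
    div_le_div_of_nonneg_right (measureReal_inter_le_min_add_min hR) measureReal_nonneg⟩

/-- sharp bounds on θ_j = P(t=j | y=j). -/
theorem theta_bounds {Ω : Type*} [MeasurableSpace Ω] (μ : Measure Ω)
    [IsProbabilityMeasure μ] (t r y : Ω → Bool)
    (ht : Measurable t) (hr : Measurable r) (hy : Measurable y) (j : Bool)
    (hyj : 0 < (μ {ω | y ω = j}).toReal) :
    (max 0 ((μ {ω | t ω = j ∧ r ω = j}).toReal - (μ {ω | r ω = j ∧ y ω = !j}).toReal)
      + max 0 ((μ {ω | r ω = !j ∧ y ω = j}).toReal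
          - (μ {ω | t ω = !j ∧ r ω = !j}).toReal)) / (μ {ω | y ω = j}).toReal
      ≤ (μ {ω | t ω = j ∧ y ω = j}).toReal / (μ {ω | y ω = j}).toReal
    ∧ (μ {ω | t ω = j ∧ y ω = j}).toReal / (μ {ω | y ω = j}).toReal
      ≤ (min ((μ {ω | t ω = j ∧ r ω = !j}).toReal) ((μ {ω | r ω = !j ∧ y ω = j}).toReal)
        + min ((μ {ω | t ω = j ∧ r ω = j}).toReal) ((μ {ω | r ω = j ∧ y ω = j}).toReal))
          / (μ {ω | y ω = j}).toReal :=
  theta_bounds_general μ t r y hr j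
end

section
/- The interval [max(0, P(t=j) − P(y=1−j)), min(P(t=j), P(y=j))]/P(y=j) obtained from Fréchet bounds on the marginals contains the interval [θ_j^L, θ_j^U] obtained from the refined bounds that use the joint distributions with r. That is, max(0, P(t=j)−P(y=1−j)) ≤ max(0, P(t=j,r=j)−P(r=j,y=1−j)) + max(0, P(r=1−j,y=j)−P(t=1−j,r=1−j)) and min(P(t=j,r=1−j), P(r=1−j,y=j)) + min(P(t=j,r=j), P(r=j,y=j)) ≤ min(P(t=j), P(y=j)). -/
/-!
Split every probability along the value of the third variable. The two decompositions of
`P(r≠j)` give `P(t=j,r≠j) - P(r≠j,y≠j) = P(r≠j,y=j) - P(t≠j,r≠j)`, so `P(t=j) - P(y≠j)` is the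
sum of the two refined differences and subadditivity of `max 0` gives the lower bound. Likewise
`P(t=j)` and `P(y=j)` are sums of the refined arguments of `min`, which is superadditive.
-/

open MeasureTheory

namespace MeasureTheory

variable {Ω : Type*} [MeasurableSpace Ω] (μ : Measure Ω) [IsFiniteMeasure μ]
  {X : Ω → Bool}

theorem measureReal_and_eq_add_and_eq_not (hX : Measurable X) (p : Ω → Prop) (b : Bool) :
    μ.real {ω | p ω ∧ X ω = b} + μ.real {ω | p ω ∧ X ω = !b} = μ.real {ω | p ω} := by
  have hdiff : {ω | p ω ∧ X ω = !b} = {ω | p ω} \ {ω | X ω = b} := by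
    ext ω
    simp [Bool.eq_not_iff]
  rw [hdiff]
  exact measureReal_inter_add_sdiff (hX (measurableSet_singleton b))

theorem measureReal_eq_and_add_eq_not_and (hX : Measurable X) (p : Ω → Prop) (b : Bool) :
    μ.real {ω | X ω = b ∧ p ω} + μ.real {ω | X ω = !b ∧ p ω} = μ.real {ω | p ω} := by
  simp only [and_comm (b := p _)]
  exact measureReal_and_eq_add_and_eq_not μ hX p b

end MeasureTheory

theorem marginal_bounds_wider_general {Ω : Type*} [MeasurableSpace Ω] (μ : Measure Ω)
    [IsProbabilityMeasure μ] (t r y : Ω → Bool)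
    (ht : Measurable t) (hr : Measurable r) (hy : Measurable y) (j : Bool) :
    max 0 ((μ {ω | t ω = j}).toReal - (μ {ω | y ω = !j}).toReal)
      ≤ max 0 ((μ {ω | t ω = j ∧ r ω = j}).toReal - (μ {ω | r ω = j ∧ y ω = !j}).toReal)
        + max 0 ((μ {ω | r ω = !j ∧ y ω = j}).toReal
            - (μ {ω | t ω = !j ∧ r ω = !j}).toReal)
    ∧ min ((μ {ω | t ω = j ∧ r ω = !j}).toReal) ((μ {ω | r ω = !j ∧ y ω = j}).toReal)
        + min ((μ {ω | t ω = j ∧ r ω = j}).toReal) ((μ {ω | r ω = j ∧ y ω = j}).toReal)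
      ≤ min ((μ {ω | t ω = j}).toReal) ((μ {ω | y ω = j}).toReal) := by
  have ht_split := measureReal_and_eq_add_and_eq_not μ hr (fun ω => t ω = j) j
  have hy_split := measureReal_eq_and_add_eq_not_and μ hr (fun ω => y ω = j) j
  have hy'_split := measureReal_eq_and_add_eq_not_and μ hr (fun ω => y ω = !j) j
  have hr'_by_t := measureReal_eq_and_add_eq_not_and μ ht (fun ω => r ω = !j) j
  have hr'_by_y := measureReal_and_eq_add_and_eq_not μ hy (fun ω => r ω = !j) j
  simp only [Measure.real] at *
  set tr := (μ {ω | t ω = j ∧ r ω = j}).toReal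
  set tr' := (μ {ω | t ω = j ∧ r ω = !j}).toReal
  set t'r' := (μ {ω | t ω = !j ∧ r ω = !j}).toReal
  set ry := (μ {ω | r ω = j ∧ y ω = j}).toReal
  set ry' := (μ {ω | r ω = j ∧ y ω = !j}).toReal
  set r'y := (μ {ω | r ω = !j ∧ y ω = j}).toReal
  constructor
  · calc _ = max (0 + 0) ((tr - ry') + (r'y - t'r')) := by
          rw [add_zero]; congr 1; linarith
      _ ≤ _ := max_add_add_le_max_add_max
  · calc _ ≤ min (tr' + tr) (r'y + ry) := min_add_min_le_min_add_add
      _ = _ := by congr 1 <;> linarith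

/-- the marginal Fréchet bounds are at least as wide as the refined bounds. -/
theorem marginal_bounds_wider {Ω : Type*} [MeasurableSpace Ω] (μ : Measure Ω)
    [IsProbabilityMeasure μ] (t r y : Ω → Bool)
    (ht : Measurable t) (hr : Measurable r) (hy : Measurable y) (j : Bool)
    (hyj : 0 < (μ {ω | y ω = j}).toReal) :
    max 0 ((μ {ω | t ω = j}).toReal - (μ {ω | y ω = !j}).toReal)
      ≤ max 0 ((μ {ω | t ω = j ∧ r ω = j}).toReal - (μ {ω | r ω = j ∧ y ω = !j}).toReal)
        + max 0 ((μ {ω | r ω = !j ∧ y ω = j}).toReal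
            - (μ {ω | t ω = !j ∧ r ω = !j}).toReal)
    ∧ min ((μ {ω | t ω = j ∧ r ω = !j}).toReal) ((μ {ω | r ω = !j ∧ y ω = j}).toReal)
        + min ((μ {ω | t ω = j ∧ r ω = j}).toReal) ((μ {ω | r ω = j ∧ y ω = j}).toReal)
      ≤ min ((μ {ω | t ω = j}).toReal) ((μ {ω | y ω = j}).toReal) :=
  marginal_bounds_wider_general μ t r y ht hr hy j
end

section
/- Suppose (θ_1, θ_0) lie on the line θ_0 = θ_1·π*/(1−π*) + 1 − q*/(1−π*) where π* ∈ (0,1) and q* ∈ (0,1) are the performance-study prevalence and positive rate. Then the implied screening prevalence (p + θ_0 − 1)/(θ_1 + θ_0 − 1) equals (p(1−π*) + θ_1·π* − q*)/(θ_1 − q*), and its derivative with respect to θ_1 equals (q* − p)(1−π*)/(q* − θ_1)², which has constant sign in θ_1 (for θ_1 ≠ q*). Hence the extrema over a closed interval [θ_1^L, θ_1^H] not containing q* are attained at the endpoints. -/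
open Set

/- Along the line, numerator and denominator of `(p + θ₀ - 1) / (θ₁ + θ₀ - 1)` are both affine in
`θ₁` with the common factor `1 / (1 - π)`, so the prevalence is a Möbius function of `θ₁` with
pole at `q`. Its derivative `(q - p)(1 - π) / (q - θ₁)²` has the sign of `(q - p)(1 - π)`, so the
prevalence is monotone on any interval avoiding `q` and its extrema sit at the endpoints. -/

theorem prevalence_eq_of_mem_line {p q π θ₁ θ₀ : ℝ} (hπ : π ≠ 1)
    (hθ₀ : θ₀ = θ₁ * π / (1 - π) + 1 - q / (1 - π)) :
    (p + θ₀ - 1) / (θ₁ + θ₀ - 1) = (p * (1 - π) + θ₁ * π - q) / (θ₁ - q) := by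
  have hπ' : 1 - π ≠ 0 := sub_ne_zero.mpr hπ.symm
  have hnum : p + θ₀ - 1 = (p * (1 - π) + θ₁ * π - q) / (1 - π) := by
    rw [hθ₀]; field_simp; ring
  have hden : θ₁ + θ₀ - 1 = (θ₁ - q) / (1 - π) := by
    rw [hθ₀]; field_simp; ring
  rw [hnum, hden, div_div_div_cancel_right₀ hπ']

theorem hasDerivAt_prevalence_along_line (p q π : ℝ) {x : ℝ} (hx : x ≠ q) :
    HasDerivAt (fun x : ℝ => (p * (1 - π) + x * π - q) / (x - q))
      ((q - p) * (1 - π) / (q - x) ^ 2) x := by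
  have hxq : x - q ≠ 0 := sub_ne_zero.mpr hx
  have hnum : HasDerivAt (fun x : ℝ => p * (1 - π) + x * π - q) π x := by
    simpa using (((hasDerivAt_id x).mul_const π).const_add (p * (1 - π))).sub_const q
  have hden : HasDerivAt (fun x : ℝ => x - q) 1 x := by
    simpa using (hasDerivAt_id x).sub_const q
  refine (hnum.div hden hxq).congr_deriv ?_
  rw [show (q - x) ^ 2 = (x - q) ^ 2 by ring]
  field_simp
  ring

theorem monotoneOn_or_antitoneOn_of_hasDerivAt_div {s : Set ℝ} (hs : Convex ℝ s)
    {f g : ℝ → ℝ} (k : ℝ) (hg : ∀ x ∈ s, 0 ≤ g x) (hf : ∀ x ∈ s, HasDerivAt f (k / g x) x) :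
    MonotoneOn f s ∨ AntitoneOn f s := by
  have hcont : ContinuousOn f s := fun x hx => (hf x hx).continuousAt.continuousWithinAt
  have hderiv : ∀ x ∈ interior s, HasDerivWithinAt f (k / g x) (interior s) x :=
    fun x hx => (hf x (interior_subset hx)).hasDerivWithinAt
  rcases le_total 0 k with hk | hk
  · exact Or.inl <| monotoneOn_of_hasDerivWithinAt_nonneg hs hcont hderiv
      fun x hx => div_nonneg hk (hg x (interior_subset hx))
  · exact Or.inr <| antitoneOn_of_hasDerivWithinAt_nonpos hs hcont hderiv
      fun x hx => div_nonpos_of_nonpos_of_nonneg hk (hg x (interior_subset hx))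

theorem min_le_and_le_max_of_monotoneOn_or_antitoneOn {α β : Type*} [LinearOrder α]
    [LinearOrder β] {f : α → β} {a b x : α}
    (hf : MonotoneOn f (Icc a b) ∨ AntitoneOn f (Icc a b)) (hx : x ∈ Icc a b) :
    min (f a) (f b) ≤ f x ∧ f x ≤ max (f a) (f b) := by
  have ha : a ∈ Icc a b := left_mem_Icc.mpr (hx.1.trans hx.2)
  have hb : b ∈ Icc a b := right_mem_Icc.mpr (hx.1.trans hx.2)
  rcases hf with hf | hf
  · exact ⟨(min_le_left _ _).trans (hf ha hx hx.1), (hf hx hb hx.2).trans (le_max_right _ _)⟩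
  · exact ⟨(min_le_right _ _).trans (hf hx hb hx.2), (hf ha hx hx.1).trans (le_max_left _ _)⟩

theorem prevalence_along_line_general (p q π L H : ℝ)
    (hπ1 : π < 1) :
    (∀ θ1 θ0 : ℝ, θ1 ≠ q → θ0 = θ1 * π / (1 - π) + 1 - q / (1 - π) →
      (p + θ0 - 1) / (θ1 + θ0 - 1) = (p * (1 - π) + θ1 * π - q) / (θ1 - q))
    ∧ (∀ θ1 : ℝ, θ1 ≠ q →
        HasDerivAt (fun x : ℝ => (p * (1 - π) + x * π - q) / (x - q))
          ((q - p) * (1 - π) / (q - θ1) ^ 2) θ1)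
    ∧ (L ≤ H → q ∉ Icc L H → ∀ θ1 ∈ Icc L H,
        min ((p * (1 - π) + L * π - q) / (L - q)) ((p * (1 - π) + H * π - q) / (H - q))
          ≤ (p * (1 - π) + θ1 * π - q) / (θ1 - q)
        ∧ (p * (1 - π) + θ1 * π - q) / (θ1 - q)
          ≤ max ((p * (1 - π) + L * π - q) / (L - q))
              ((p * (1 - π) + H * π - q) / (H - q))) := by
  refine ⟨fun θ1 θ0 _ hθ0 => prevalence_eq_of_mem_line hπ1.ne hθ0,
    fun θ1 hθ1 => hasDerivAt_prevalence_along_line p q π hθ1, ?_⟩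
  intro _ hq θ1 hθ1
  have hne : ∀ x ∈ Icc L H, x ≠ q := fun x hx hxq => hq (hxq ▸ hx)
  refine min_le_and_le_max_of_monotoneOn_or_antitoneOn
    (f := fun x : ℝ => (p * (1 - π) + x * π - q) / (x - q)) ?_ hθ1
  exact monotoneOn_or_antitoneOn_of_hasDerivAt_div (convex_Icc L H) _
    (fun x _ => sq_nonneg (q - x))
    fun x hx => hasDerivAt_prevalence_along_line p q π (hne x hx)

/-- prevalence along the linear identified set, its derivative,
and attainment of extrema at endpoints. -/
theorem prevalence_along_line (p q π L H : ℝ)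
    (hπ0 : 0 < π) (hπ1 : π < 1) (hq0 : 0 < q) (hq1 : q < 1)
    (hp0 : 0 ≤ p) (hp1 : p ≤ 1) :
    (∀ θ1 θ0 : ℝ, θ1 ≠ q → θ0 = θ1 * π / (1 - π) + 1 - q / (1 - π) →
      (p + θ0 - 1) / (θ1 + θ0 - 1) = (p * (1 - π) + θ1 * π - q) / (θ1 - q))
    ∧ (∀ θ1 : ℝ, θ1 ≠ q →
        HasDerivAt (fun x : ℝ => (p * (1 - π) + x * π - q) / (x - q))
          ((q - p) * (1 - π) / (q - θ1) ^ 2) θ1)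
    ∧ (L ≤ H → q ∉ Icc L H → ∀ θ1 ∈ Icc L H,
        min ((p * (1 - π) + L * π - q) / (L - q)) ((p * (1 - π) + H * π - q) / (H - q))
          ≤ (p * (1 - π) + θ1 * π - q) / (θ1 - q)
        ∧ (p * (1 - π) + θ1 * π - q) / (θ1 - q)
          ≤ max ((p * (1 - π) + L * π - q) / (L - q))
              ((p * (1 - π) + H * π - q) / (H - q))) :=
  prevalence_along_line_general p q π L H hπ1
end

section
/- If the identified set for (θ_1, θ_0) is not a singleton (θ_1^L < θ_1^U and θ_0^L < θ_0^U) and all values satisfy θ_1 + θ_0 > 1, then the sharp prevalence bound interval [min{f(θ_1^L,θ_0^L), f(θ_1^U,θ_0^U)}, max{f(θ_1^L,θ_0^L), f(θ_1^U,θ_0^U)}] is strictly contained in the rectangle-based interval [f(θ_1^U,θ_0^L), f(θ_1^L,θ_0^U)], where f(a,b) = (p + b − 1)/(a + b − 1) for fixed p ∈ (1−θ_0^L, θ_1^L). -/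
/-! Write `f(a, b) = prevalence p a b`. For `1 - b < p < a` both the numerator `p + b - 1` and
the denominator of `f` are positive, and `f(a, b) = 1 - (a - p) / (a + b - 1)` with `a - p > 0`,
so `f` is strictly decreasing in `a` and strictly increasing in `b`. Hence on the rectangle
`[θ₁ᴸ, θ₁ᵁ] × [θ₀ᴸ, θ₀ᵁ]` the corner `(θ₁ᵁ, θ₀ᴸ)` is the unique minimiser and `(θ₁ᴸ, θ₀ᵁ)` the
unique maximiser, so the other two corners lie strictly between them. -/

noncomputable def prevalence (p a b : ℝ) : ℝ := (p + b - 1) / (a + b - 1)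

lemma prevalence_eq_one_sub {p a b : ℝ} (h : a + b - 1 ≠ 0) :
    prevalence p a b = 1 - (a - p) / (a + b - 1) := by
  rw [prevalence, eq_sub_iff_add_eq, ← add_div, div_eq_one_iff_eq h]
  ring

lemma prevalence_lt_prevalence_left {p a a' b : ℝ} (hp : 1 - b < p) (ha : 1 < a + b)
    (haa' : a < a') : prevalence p a' b < prevalence p a b :=
  div_lt_div_of_pos_left (by linarith) (by linarith) (by linarith)

lemma prevalence_lt_prevalence_right {p a b b' : ℝ} (hp : p < a) (hb : 1 < a + b)
    (hbb' : b < b') : prevalence p a b < prevalence p a b' := by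
  rw [prevalence_eq_one_sub (by linarith), prevalence_eq_one_sub (by linarith)]
  gcongr 1 - ?_
  exact div_lt_div_of_pos_left (by linarith) (by linarith) (by linarith)

theorem sharp_prevalence_strictly_narrower_general (θ1L θ1U θ0L θ0U p : ℝ)
    (h1 : θ1L < θ1U) (h0 : θ0L < θ0U)
    (hcorner : 1 < θ1L + θ0L)
    (hpl : 1 - θ0L < p) (hpu : p < θ1L) :
    (p + θ0L - 1) / (θ1U + θ0L - 1)
      < min ((p + θ0L - 1) / (θ1L + θ0L - 1)) ((p + θ0U - 1) / (θ1U + θ0U - 1))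
    ∧ max ((p + θ0L - 1) / (θ1L + θ0L - 1)) ((p + θ0U - 1) / (θ1U + θ0U - 1))
      < (p + θ0U - 1) / (θ1L + θ0U - 1) :=
  ⟨lt_min (prevalence_lt_prevalence_left hpl hcorner h1)
      (prevalence_lt_prevalence_right (hpu.trans h1) (by linarith) h0),
    max_lt (prevalence_lt_prevalence_right hpu hcorner h0)
      (prevalence_lt_prevalence_left (by linarith) (by linarith) h1)⟩

/-- the sharp prevalence bounds are strictly inside the
rectangle-based bounds when the identified set is not a singleton. -/
theorem sharp_prevalence_strictly_narrower (θ1L θ1U θ0L θ0U p : ℝ)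
    (h1 : θ1L < θ1U) (h0 : θ0L < θ0U)
    (h1L : 0 ≤ θ1L) (h1U : θ1U ≤ 1) (h0L : 0 ≤ θ0L) (h0U : θ0U ≤ 1)
    (hcorner : 1 < θ1L + θ0L)
    (hpl : 1 - θ0L < p) (hpu : p < θ1L) :
    (p + θ0L - 1) / (θ1U + θ0L - 1)
      < min ((p + θ0L - 1) / (θ1L + θ0L - 1)) ((p + θ0U - 1) / (θ1U + θ0U - 1))
    ∧ max ((p + θ0L - 1) / (θ1L + θ0L - 1)) ((p + θ0U - 1) / (θ1U + θ0U - 1))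
      < (p + θ0U - 1) / (θ1L + θ0U - 1) :=
  sharp_prevalence_strictly_narrower_general θ1L θ1U θ0L θ0U p h1 h0 hcorner hpl hpu
end

section
/- Let (t, r) be a pair of Bernoulli random variables whose joint distribution satisfies P(t=j, r=k) ≥ ε for all (j,k) ∈ {0,1}² with 0 < ε ≤ 1/4. Then the squared correlation satisfies ρ(r,t)² ≤ (1−4ε)², with equality attainable; in particular ρ(r,t)² < 1 when ε > 0. -/
/-!
Writing `a, b, c, d` for `p11, p10, p01, p00`, the covariance is `a d - b c` and the variances of
`r` and `t` are `(a + c)(b + d)` and `(a + b)(c + d)`. If `b, c ≥ ε` then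
`(a + b)(c + d) - (a d - b c) = a c + b d + 2 b c ≥ ε (a + b + c + d) = ε ≥ 4 ε (a + b)(c + d)`,
so `a d - b c ≤ (1 - 4ε)(a + b)(c + d)`. Permuting the cells bounds `|a d - b c|` by `1 - 4ε`
times either variance, and multiplying the two bounds gives `ρ² ≤ (1 - 4ε)²`. Equality holds for
the symmetric table `(1/2 - ε, ε, ε, 1/2 - ε)`.
-/

namespace Bernoulli

/-- The squared correlation `ρ(r, t)²` of the table `p_{jk} = P(t = j, r = k)`, whose last cell
`p00 = 1 - p11 - p10 - p01` enters only through the complements `1 - E r` and `1 - E t`. -/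
noncomputable def corrSq (p11 p10 p01 : ℝ) : ℝ :=
  (p11 - (p11 + p01) * (p11 + p10)) ^ 2
    / (((p11 + p01) * (1 - (p11 + p01))) * ((p11 + p10) * (1 - (p11 + p10))))

section

variable {ε a b c d : ℝ}

theorem mul_sub_mul_le (hε : 0 ≤ ε) (ha : 0 ≤ a) (hb : ε ≤ b) (hc : ε ≤ c) (hd : 0 ≤ d)
    (hsum : a + b + c + d = 1) :
    a * d - b * c ≤ (1 - 4 * ε) * ((a + b) * (c + d)) := by
  have hcells : ε ≤ a * c + b * d + 2 * (b * c) := by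
    nlinarith [mul_le_mul_of_nonneg_left hc ha, mul_le_mul_of_nonneg_right hb hd,
      mul_le_mul_of_nonneg_left hc (hε.trans hb), mul_le_mul_of_nonneg_right hb (hε.trans hc)]
  have hamgm : 4 * ((a + b) * (c + d)) ≤ 1 := by
    nlinarith [sq_nonneg (a + b - (c + d))]
  nlinarith [mul_le_mul_of_nonneg_left hamgm hε]

theorem abs_mul_sub_mul_le (hε : 0 ≤ ε) (ha : ε ≤ a) (hb : ε ≤ b) (hc : ε ≤ c) (hd : ε ≤ d)
    (hsum : a + b + c + d = 1) :
    |a * d - b * c| ≤ (1 - 4 * ε) * ((a + b) * (c + d)) := by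
  rw [abs_le]
  constructor
  · have := mul_sub_mul_le hε (hε.trans hb) ha hd (hε.trans hc) (by linarith)
    linarith
  · exact mul_sub_mul_le hε (hε.trans ha) hb hc (hε.trans hd) hsum

theorem sq_mul_sub_mul_le (hε : 0 ≤ ε) (ha : ε ≤ a) (hb : ε ≤ b)
    (hc : ε ≤ c) (hd : ε ≤ d) (hsum : a + b + c + d = 1) :
    (a * d - b * c) ^ 2 ≤ (1 - 4 * ε) ^ 2 * (((a + c) * (b + d)) * ((a + b) * (c + d))) := by
  have hrow := abs_mul_sub_mul_le hε ha hb hc hd hsum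
  have hcol := abs_mul_sub_mul_le hε ha hc hb hd (by linarith)
  rw [mul_comm c b] at hcol
  calc (a * d - b * c) ^ 2 = |a * d - b * c| * |a * d - b * c| := by rw [abs_mul_abs_self, sq]
    _ ≤ ((1 - 4 * ε) * ((a + c) * (b + d))) * ((1 - 4 * ε) * ((a + b) * (c + d))) :=
        mul_le_mul hcol hrow (abs_nonneg _) (le_trans (abs_nonneg _) hcol)
    _ = _ := by ring

theorem corrSq_eq (hsum : a + b + c + d = 1) :
    corrSq a b c = (a * d - b * c) ^ 2 / (((a + c) * (b + d)) * ((a + b) * (c + d))) := by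
  have hcov : a - (a + c) * (a + b) = a * d - b * c := by
    rw [show d = 1 - a - b - c by linarith]; ring
  rw [corrSq, hcov, show 1 - (a + c) = b + d by linarith, show 1 - (a + b) = c + d by linarith]

theorem corrSq_le (hε : 0 < ε) (ha : ε ≤ a) (hb : ε ≤ b) (hc : ε ≤ c)
    (hd : ε ≤ d) (hsum : a + b + c + d = 1) :
    corrSq a b c ≤ (1 - 4 * ε) ^ 2 := by
  have hvar : 0 < ((a + c) * (b + d)) * ((a + b) * (c + d)) := by
    have : 0 < a := hε.trans_le ha
    have : 0 < b := hε.trans_le hb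
    have : 0 < c := hε.trans_le hc
    have : 0 < d := hε.trans_le hd
    positivity
  rw [corrSq_eq hsum, div_le_iff₀ hvar]
  exact sq_mul_sub_mul_le hε.le ha hb hc hd hsum

theorem corrSq_symmetric (ε : ℝ) : corrSq (1 / 2 - ε) ε ε = (1 - 4 * ε) ^ 2 := by
  rw [corrSq]
  norm_num
  ring

end

end Bernoulli

open Bernoulli in
/-- `p_{jk} = P(t = j, r = k)`, so `E r = p11 + p01`, `E t = p11 + p10` and `E(r t) = p11`. -/
theorem bernoulli_correlation_bound (ε : ℝ) (hε : 0 < ε) (hε4 : ε ≤ 1 / 4) :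
    (∀ p11 p10 p01 p00 : ℝ, ε ≤ p11 → ε ≤ p10 → ε ≤ p01 → ε ≤ p00 →
      p11 + p10 + p01 + p00 = 1 →
      (p11 - (p11 + p01) * (p11 + p10)) ^ 2
          / (((p11 + p01) * (1 - (p11 + p01))) * ((p11 + p10) * (1 - (p11 + p10))))
        ≤ (1 - 4 * ε) ^ 2)
    ∧ (∃ p11 p10 p01 p00 : ℝ, ε ≤ p11 ∧ ε ≤ p10 ∧ ε ≤ p01 ∧ ε ≤ p00 ∧
        p11 + p10 + p01 + p00 = 1 ∧
        (p11 - (p11 + p01) * (p11 + p10)) ^ 2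
            / (((p11 + p01) * (1 - (p11 + p01))) * ((p11 + p10) * (1 - (p11 + p10))))
          = (1 - 4 * ε) ^ 2)
    ∧ (1 - 4 * ε) ^ 2 < 1 := by
  refine ⟨fun p11 p10 p01 p00 h11 h10 h01 h00 hsum => corrSq_le hε h11 h10 h01 h00 hsum,
    ⟨1 / 2 - ε, ε, ε, 1 / 2 - ε, by linarith, le_rfl, le_rfl, by linarith, by ring,
      corrSq_symmetric ε⟩, ?_⟩
  nlinarith
end
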